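/- Fourier reduction: let (P,Q,x) be a C¹ solution of the two-row system with ΔW(ξ) = U cos(2πξ/ℓ), and define for n ≥ 1 the Fourier coefficients pₙᶜ(t) = (2/ℓ)∫₀^ℓ P(ξ,t)cos(2nπξ/ℓ)dξ, pₙˢ(t) = (2/ℓ)∫₀^ℓ P(ξ,t)sin(2nπξ/ℓ)dξ (and qₙᶜ, qₙˢ analogously from Q), and aₙ = (2/ℓ)∫₀^ℓ ω_B(ξ)cos(2nπξ/ℓ)dξ, bₙ = (2/ℓ)∫₀^ℓ ω_B(ξ)sin(2nπξ/ℓ)dξ. Then with v(t) = x'(t), for each n ≥ 1 and all t ≥ 0: (pₙᶜ)'(t) + (2πn/ℓ)v(t)pₙˢ(t) = −a₀pₙᶜ(t) + aₙ/ℓ, (pₙˢ)'(t) − (2πn/ℓ)v(t)pₙᶜ(t) = −a₀pₙˢ(t) + bₙ/ℓ, (qₙᶜ)'(t) − (2πn/ℓ)v(t)qₙˢ(t) = −a₀qₙᶜ(t) + aₙ/ℓ, (qₙˢ)'(t) + (2πn/ℓ)v(t)qₙᶜ(t) = −a₀qₙˢ(t) + bₙ/ℓ; moreover the force balance becomes 2η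 x'(t) + 2k x(t) + πU(p₁ˢ(t) − q₁ˢ(t)) = 0. -/

import Mathlib

/-! The time derivative of a Fourier coefficient of `P` is the Fourier coefficient of `∂ₜP`, which
the transport equation turns into `-a₀ P + ω_B / ℓ ∓ v ∂_ξ P`. Integrating `∂_ξ P` against the
cosine or sine by parts, the boundary terms cancel by periodicity and the opposite coefficient
appears with the factor `±2πn/ℓ`. The force balance is the case `n = 1`, since `ΔW'` is a multiple
of `sin (2πξ/ℓ)`. -/

open Real Set

/-- The `n`-th cosine Fourier coefficient `(2/ℓ)∫₀^ℓ f(ξ) cos(2nπξ/ℓ) dξ`. -/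
noncomputable def fourCos (ℓ : ℝ) (f : ℝ → ℝ) (n : ℕ) : ℝ :=
  (2 / ℓ) * ∫ ξ in (0 : ℝ)..ℓ, f ξ * Real.cos (2 * n * π * ξ / ℓ)

/-- The `n`-th sine Fourier coefficient `(2/ℓ)∫₀^ℓ f(ξ) sin(2nπξ/ℓ) dξ`. -/
noncomputable def fourSin (ℓ : ℝ) (f : ℝ → ℝ) (n : ℕ) : ℝ :=
  (2 / ℓ) * ∫ ξ in (0 : ℝ)..ℓ, f ξ * Real.sin (2 * n * π * ξ / ℓ)

open MeasureTheory intervalIntegral Function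

theorem hasDerivWithinAt_intervalIntegral_Ici {f f' : ℝ → ℝ → ℝ} {a b c t : ℝ}
    (hf : ∀ s ∈ Ici c, IntervalIntegrable (fun ξ => f ξ s) volume a b)
    (hf' : ContinuousOn (uncurry f') (univ ×ˢ Ici c))
    (hderiv : ∀ ξ, ∀ s ∈ Ici c, HasDerivWithinAt (f ξ) (f' ξ s) (Ici c) s)
    (ht : t ∈ Ici c) :
    HasDerivWithinAt (fun s => ∫ ξ in a..b, f ξ s) (∫ ξ in a..b, f' ξ t) (Ici c) t := by
  -- The derivative is one-sided at `c`, so instead of dominated convergence we write the integral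
  -- as a primitive of `G` (FTC in time, then Fubini), after freezing `f'` at time `c` before `c`.
  set g : ℝ → ℝ → ℝ := fun ξ τ => f' ξ (max c τ)
  have hg : Continuous (uncurry g) :=
    hf'.comp_continuous (continuous_fst.prodMk (continuous_const.max continuous_snd))
      fun _ => ⟨trivial, mem_Ici.2 (le_max_left _ _)⟩
  have hg_eq : ∀ ξ, ∀ τ ∈ Ici c, g ξ τ = f' ξ τ := fun ξ τ hτ => by
    simp only [g, max_eq_right (mem_Ici.1 hτ)]
  set G : ℝ → ℝ := fun τ => ∫ ξ in a..b, g ξ τ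
  have hG : Continuous G :=
    continuous_parametric_intervalIntegral_of_continuous' (f := fun τ ξ => g ξ τ)
      (hg.comp continuous_swap) a b
  have hFTC : ∀ ξ, ∀ s ∈ Ici c, ∫ τ in c..s, g ξ τ = f ξ s - f ξ c := fun ξ s hs =>
    integral_eq_sub_of_hasDeriv_right_of_le hs
      (fun τ hτ => ((hderiv ξ τ hτ.1).continuousWithinAt.mono Icc_subset_Ici_self))
      (fun τ hτ => by
        rw [hg_eq ξ τ (mem_Ici.2 hτ.1.le)]
        exact ((hderiv ξ τ (mem_Ici.2 hτ.1.le)).hasDerivAt (Ici_mem_nhds hτ.1)).hasDerivWithinAt)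
      ((hg.comp (continuous_const.prodMk continuous_id)).intervalIntegrable c s)
  have hkey : ∀ s ∈ Ici c, ∫ ξ in a..b, f ξ s = (∫ ξ in a..b, f ξ c) + ∫ τ in c..s, G τ := by
    intro s hs
    have hfubini : ∫ ξ in a..b, ∫ τ in c..s, g ξ τ = ∫ τ in c..s, G τ :=
      intervalIntegral_intervalIntegral_swap <|
        (hg.continuousOn.integrableOn_compact (isCompact_uIcc.prod isCompact_uIcc)).mono_set
          (prod_mono uIoc_subset_uIcc uIoc_subset_uIcc)
    rw [← hfubini, integral_congr fun ξ _ => hFTC ξ s hs,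
      intervalIntegral.integral_sub (hf s hs) (hf c self_mem_Ici)]
    ring
  have hG_deriv : HasDerivAt (fun s => (∫ ξ in a..b, f ξ c) + ∫ τ in c..s, G τ) (G t) t :=
    (hG.integral_hasStrictDerivAt c t).hasDerivAt.const_add _
  rw [show ∫ ξ in a..b, f' ξ t = G t from integral_congr fun ξ _ => (hg_eq ξ t ht).symm]
  exact hG_deriv.hasDerivWithinAt.congr hkey (hkey t ht)

section Partials

variable {P : ℝ → ℝ → ℝ} {T : Set ℝ}

theorem ContDiffOn.hasDerivWithinAt_snd (hP : ContDiffOn ℝ 1 (uncurry P) (univ ×ˢ T))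
    (ξ : ℝ) {s : ℝ} (hs : s ∈ T) :
    HasDerivWithinAt (P ξ) (fderivWithin ℝ (uncurry P) (univ ×ˢ T) (ξ, s) (0, 1)) T s := by
  have hpath : HasDerivWithinAt (fun τ => (ξ, τ)) ((0 : ℝ), (1 : ℝ)) T s :=
    ((hasDerivAt_const s ξ).prodMk (hasDerivAt_id s)).hasDerivWithinAt
  exact (hP.differentiableOn one_ne_zero (ξ, s) ⟨trivial, hs⟩).hasFDerivWithinAt
    |>.comp_hasDerivWithinAt s hpath fun τ hτ => (⟨trivial, hτ⟩ : (ξ, τ) ∈ univ ×ˢ T)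

theorem ContDiffOn.hasDerivAt_fst (hP : ContDiffOn ℝ 1 (uncurry P) (univ ×ˢ T))
    (ξ : ℝ) {s : ℝ} (hs : s ∈ T) :
    HasDerivAt (fun ζ => P ζ s) (fderivWithin ℝ (uncurry P) (univ ×ˢ T) (ξ, s) (1, 0)) ξ := by
  have hpath : HasDerivWithinAt (fun ζ => (ζ, s)) ((1 : ℝ), (0 : ℝ)) univ ξ :=
    ((hasDerivAt_id ξ).prodMk (hasDerivAt_const ξ s)).hasDerivWithinAt
  rw [← hasDerivWithinAt_univ]
  exact (hP.differentiableOn one_ne_zero (ξ, s) ⟨trivial, hs⟩).hasFDerivWithinAt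
    |>.comp_hasDerivWithinAt ξ hpath fun ζ _ => (⟨trivial, hs⟩ : (ζ, s) ∈ univ ×ˢ T)

theorem ContDiffOn.continuous_fst (hP : ContDiffOn ℝ 1 (uncurry P) (univ ×ˢ T)) {s : ℝ}
    (hs : s ∈ T) : Continuous fun ζ => P ζ s :=
  continuous_iff_continuousAt.2 fun ξ => (hP.hasDerivAt_fst ξ hs).continuousAt

end Partials

section Fourier

theorem hasDerivAt_fourierArg (ℓ : ℝ) (n : ℕ) (ξ : ℝ) :
    HasDerivAt (fun ξ : ℝ => 2 * n * π * ξ / ℓ) (2 * n * π / ℓ) ξ := by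
  simpa using ((hasDerivAt_id ξ).const_mul (2 * n * π)).div_const ℓ

variable {ℓ : ℝ}

theorem fourCos_add {f g : ℝ → ℝ} (hf : Continuous f) (hg : Continuous g) (n : ℕ) :
    fourCos ℓ (fun ξ => f ξ + g ξ) n = fourCos ℓ f n + fourCos ℓ g n := by
  have hI : ∀ {h : ℝ → ℝ}, Continuous h →
      IntervalIntegrable (fun ξ => h ξ * cos (2 * n * π * ξ / ℓ)) volume 0 ℓ :=
    fun hh => (hh.mul (by fun_prop)).intervalIntegrable _ _
  simp only [fourCos, add_mul]
  rw [integral_add (hI hf) (hI hg), mul_add]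

theorem fourSin_add {f g : ℝ → ℝ} (hf : Continuous f) (hg : Continuous g) (n : ℕ) :
    fourSin ℓ (fun ξ => f ξ + g ξ) n = fourSin ℓ f n + fourSin ℓ g n := by
  have hI : ∀ {h : ℝ → ℝ}, Continuous h →
      IntervalIntegrable (fun ξ => h ξ * sin (2 * n * π * ξ / ℓ)) volume 0 ℓ :=
    fun hh => (hh.mul (by fun_prop)).intervalIntegrable _ _
  simp only [fourSin, add_mul]
  rw [integral_add (hI hf) (hI hg), mul_add]

theorem fourSin_sub {f g : ℝ → ℝ} (hf : Continuous f) (hg : Continuous g) (n : ℕ) :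
    fourSin ℓ (fun ξ => f ξ - g ξ) n = fourSin ℓ f n - fourSin ℓ g n := by
  have hI : ∀ {h : ℝ → ℝ}, Continuous h →
      IntervalIntegrable (fun ξ => h ξ * sin (2 * n * π * ξ / ℓ)) volume 0 ℓ :=
    fun hh => (hh.mul (by fun_prop)).intervalIntegrable _ _
  simp only [fourSin, sub_mul]
  rw [integral_sub (hI hf) (hI hg), mul_sub]

theorem fourCos_const_mul (c : ℝ) (f : ℝ → ℝ) (n : ℕ) :
    fourCos ℓ (fun ξ => c * f ξ) n = c * fourCos ℓ f n := by
  simp only [fourCos, mul_assoc, intervalIntegral.integral_const_mul]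
  ring

theorem fourSin_const_mul (c : ℝ) (f : ℝ → ℝ) (n : ℕ) :
    fourSin ℓ (fun ξ => c * f ξ) n = c * fourSin ℓ f n := by
  simp only [fourSin, mul_assoc, intervalIntegral.integral_const_mul]
  ring

theorem cos_fourierArg_self (hℓ : ℓ ≠ 0) (n : ℕ) : cos (2 * n * π * ℓ / ℓ) = 1 := by
  rw [mul_div_cancel_right₀ _ hℓ, mul_comm 2, mul_assoc, cos_nat_mul_two_pi]

theorem sin_fourierArg_self (hℓ : ℓ ≠ 0) (n : ℕ) : sin (2 * n * π * ℓ / ℓ) = 0 := by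
  rw [mul_div_cancel_right₀ _ hℓ, mul_comm 2, mul_assoc, ← sub_zero (n * (2 * π)),
    sin_nat_mul_two_pi_sub, sin_zero, neg_zero]

variable {u u' : ℝ → ℝ}

theorem fourCos_eq_fourSin_of_hasDerivAt (hℓ : ℓ ≠ 0)
    (hu : ∀ ξ ∈ uIcc 0 ℓ, HasDerivAt u (u' ξ) ξ) (hu' : IntervalIntegrable u' volume 0 ℓ)
    (hper : u ℓ = u 0) (n : ℕ) :
    fourCos ℓ u' n = 2 * π * n / ℓ * fourSin ℓ u n := by
  have hibp := integral_mul_deriv_eq_deriv_mul hu (fun ξ _ => (hasDerivAt_fourierArg ℓ n ξ).cos) hu'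
    ((by fun_prop : Continuous fun ξ : ℝ => -sin (2 * n * π * ξ / ℓ) * (2 * n * π / ℓ)
      ).intervalIntegrable _ _)
  simp only [hper, cos_fourierArg_self hℓ, mul_zero, zero_div, cos_zero, sub_self, zero_sub,
    mul_neg, intervalIntegral.integral_neg, ← mul_assoc, intervalIntegral.integral_mul_const]
    at hibp
  simp only [fourCos, fourSin]
  linear_combination 2 / ℓ * hibp

theorem fourSin_eq_fourCos_of_hasDerivAt (hℓ : ℓ ≠ 0)
    (hu : ∀ ξ ∈ uIcc 0 ℓ, HasDerivAt u (u' ξ) ξ) (hu' : IntervalIntegrable u' volume 0 ℓ)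
    (hper : u ℓ = u 0) (n : ℕ) :
    fourSin ℓ u' n = -(2 * π * n / ℓ) * fourCos ℓ u n := by
  have hibp := integral_mul_deriv_eq_deriv_mul hu (fun ξ _ => (hasDerivAt_fourierArg ℓ n ξ).sin) hu'
    ((by fun_prop : Continuous fun ξ : ℝ => cos (2 * n * π * ξ / ℓ) * (2 * n * π / ℓ)
      ).intervalIntegrable _ _)
  simp only [hper, sin_fourierArg_self hℓ, mul_zero, zero_div, sin_zero, sub_self, zero_sub,
    ← mul_assoc, intervalIntegral.integral_mul_const] at hibp
  simp only [fourCos, fourSin]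
  linear_combination 2 / ℓ * hibp

theorem hasDerivWithinAt_fourCos {c t : ℝ} {P P' : ℝ → ℝ → ℝ}
    (hP : ∀ s ∈ Ici c, Continuous fun ξ => P ξ s)
    (hP' : ContinuousOn (uncurry P') (univ ×ˢ Ici c))
    (hderiv : ∀ ξ, ∀ s ∈ Ici c, HasDerivWithinAt (P ξ) (P' ξ s) (Ici c) s) (n : ℕ)
    (ht : t ∈ Ici c) :
    HasDerivWithinAt (fun s => fourCos ℓ (fun ξ => P ξ s) n)
      (fourCos ℓ (fun ξ => P' ξ t) n) (Ici c) t :=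
  (hasDerivWithinAt_intervalIntegral_Ici (f := fun ξ s => P ξ s * cos (2 * n * π * ξ / ℓ))
    (f' := fun ξ s => P' ξ s * cos (2 * n * π * ξ / ℓ))
    (fun s hs => ((hP s hs).mul (by fun_prop)).intervalIntegrable _ _)
    (hP'.mul (by fun_prop : Continuous fun p : ℝ × ℝ => cos (2 * n * π * p.1 / ℓ)).continuousOn)
    (fun ξ s hs => (hderiv ξ s hs).mul_const _) ht).const_mul (2 / ℓ)

theorem hasDerivWithinAt_fourSin {c t : ℝ} {P P' : ℝ → ℝ → ℝ}
    (hP : ∀ s ∈ Ici c, Continuous fun ξ => P ξ s)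
    (hP' : ContinuousOn (uncurry P') (univ ×ˢ Ici c))
    (hderiv : ∀ ξ, ∀ s ∈ Ici c, HasDerivWithinAt (P ξ) (P' ξ s) (Ici c) s) (n : ℕ)
    (ht : t ∈ Ici c) :
    HasDerivWithinAt (fun s => fourSin ℓ (fun ξ => P ξ s) n)
      (fourSin ℓ (fun ξ => P' ξ t) n) (Ici c) t :=
  (hasDerivWithinAt_intervalIntegral_Ici (f := fun ξ s => P ξ s * sin (2 * n * π * ξ / ℓ))
    (f' := fun ξ s => P' ξ s * sin (2 * n * π * ξ / ℓ))
    (fun s hs => ((hP s hs).mul (by fun_prop)).intervalIntegrable _ _)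
    (hP'.mul (by fun_prop : Continuous fun p : ℝ × ℝ => sin (2 * n * π * p.1 / ℓ)).continuousOn)
    (fun ξ s hs => (hderiv ξ s hs).mul_const _) ht).const_mul (2 / ℓ)

theorem hasDerivWithinAt_fourCos_fourSin_of_transport {a₀ ε c t : ℝ} (hℓ : ℓ ≠ 0)
    {ω : ℝ → ℝ} (hω : Continuous ω) {P : ℝ → ℝ → ℝ} {v : ℝ → ℝ}
    (hP : ContDiffOn ℝ 1 (uncurry P) (univ ×ˢ Ici c))
    (hper : ∀ s ∈ Ici c, Periodic (fun ξ => P ξ s) ℓ)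
    (hpde : ∀ ξ, ∀ s ∈ Ici c,
      derivWithin (P ξ) (Ici c) s + ε * v s * deriv (fun ζ => P ζ s) ξ = -a₀ * P ξ s + ω ξ / ℓ)
    (n : ℕ) (ht : t ∈ Ici c) :
    HasDerivWithinAt (fun s => fourCos ℓ (fun ξ => P ξ s) n)
      (-a₀ * fourCos ℓ (fun ξ => P ξ t) n + fourCos ℓ ω n / ℓ
        - ε * (2 * π * n / ℓ) * v t * fourSin ℓ (fun ξ => P ξ t) n) (Ici c) t ∧
    HasDerivWithinAt (fun s => fourSin ℓ (fun ξ => P ξ s) n)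
      (-a₀ * fourSin ℓ (fun ξ => P ξ t) n + fourSin ℓ ω n / ℓ
        + ε * (2 * π * n / ℓ) * v t * fourCos ℓ (fun ξ => P ξ t) n) (Ici c) t := by
  set S := univ ×ˢ Ici c
  set Pt : ℝ → ℝ → ℝ := fun ξ s => fderivWithin ℝ (uncurry P) S (ξ, s) (0, 1)
  set Px : ℝ → ℝ := fun ξ => fderivWithin ℝ (uncurry P) S (ξ, t) (1, 0)
  have hD : ∀ w, ContinuousOn (fun p => fderivWithin ℝ (uncurry P) S p w) S := fun _ =>
    (hP.continuousOn_fderivWithin (uniqueDiffOn_univ.prod (uniqueDiffOn_Ici c)) le_rfl).clm_apply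
      continuousOn_const
  have hPt : ContinuousOn (uncurry Pt) S := hD (0, 1)
  have hPx : Continuous Px := (hD (1, 0)).comp_continuous (continuous_id.prodMk continuous_const)
    fun ξ => (⟨trivial, ht⟩ : (ξ, t) ∈ S)
  have hP_t : Continuous fun ξ => P ξ t := hP.continuous_fst ht
  have hPt_eq : (fun ξ => Pt ξ t) = fun ξ => -a₀ * P ξ t + (ℓ⁻¹ * ω ξ + -(ε * v t) * Px ξ) := by
    funext ξ
    have h := hpde ξ t ht
    rw [(hP.hasDerivWithinAt_snd ξ ht).derivWithin (uniqueDiffOn_Ici c t ht),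
      (hP.hasDerivAt_fst ξ ht).deriv] at h
    linear_combination h
  have hibp : ∀ ξ ∈ uIcc 0 ℓ, HasDerivAt (fun ζ => P ζ t) (Px ξ) ξ :=
    fun ξ _ => hP.hasDerivAt_fst ξ ht
  have hper_t : P ℓ t = P 0 t := by simpa using hper t ht 0
  clear_value Px
  constructor
  · refine (hasDerivWithinAt_fourCos (fun s hs => hP.continuous_fst hs) hPt
      (fun ξ s hs => hP.hasDerivWithinAt_snd ξ hs) n ht).congr_deriv ?_
    rw [hPt_eq, fourCos_add, fourCos_add, fourCos_const_mul, fourCos_const_mul, fourCos_const_mul,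
      fourCos_eq_fourSin_of_hasDerivAt hℓ hibp (hPx.intervalIntegrable _ _) hper_t]
    · ring
    all_goals fun_prop
  · refine (hasDerivWithinAt_fourSin (fun s hs => hP.continuous_fst hs) hPt
      (fun ξ s hs => hP.hasDerivWithinAt_snd ξ hs) n ht).congr_deriv ?_
    rw [hPt_eq, fourSin_add, fourSin_add, fourSin_const_mul, fourSin_const_mul, fourSin_const_mul,
      fourSin_eq_fourCos_of_hasDerivAt hℓ hibp (hPx.intervalIntegrable _ _) hper_t]
    · ring
    all_goals fun_prop

theorem integral_mul_deriv_cos_eq_fourSin (U : ℝ) (f : ℝ → ℝ) :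
    ∫ ξ in (0 : ℝ)..ℓ, f ξ * deriv (fun ζ => U * cos (2 * π * ζ / ℓ)) ξ
      = -(π * U) * fourSin ℓ f 1 := by
  have hderiv : ∀ ξ, deriv (fun ζ => U * cos (2 * π * ζ / ℓ)) ξ
      = -(U * (2 * π / ℓ)) * sin (2 * π * ξ / ℓ) := fun ξ => by
    have h := ((hasDerivAt_fourierArg ℓ 1 ξ).cos.const_mul U).deriv
    simp only [Nat.cast_one, mul_one] at h
    rw [h]
    ring
  simp only [hderiv, fourSin, Nat.cast_one, mul_one, mul_left_comm (f _) (-(U * (2 * π / ℓ))),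
    intervalIntegral.integral_const_mul]
  ring

end Fourier

theorem two_row_fourier_reduction_general
    (ℓ k η U a₀ : ℝ) (hℓ : 0 < ℓ)
    (ωB : ℝ → ℝ)
    (hωB : ContDiff ℝ 1 ωB)
    (P Q : ℝ → ℝ → ℝ) (x v : ℝ → ℝ)
    (hPreg : ContDiffOn ℝ 1 (fun p : ℝ × ℝ => P p.1 p.2) (univ ×ˢ Ici 0))
    (hQreg : ContDiffOn ℝ 1 (fun p : ℝ × ℝ => Q p.1 p.2) (univ ×ˢ Ici 0))
    (hPper : ∀ t ∈ Ici (0 : ℝ), Function.Periodic (fun ξ => P ξ t) ℓ)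
    (hQper : ∀ t ∈ Ici (0 : ℝ), Function.Periodic (fun ξ => Q ξ t) ℓ)
    (hPpde : ∀ ξ, ∀ t ∈ Ici (0 : ℝ),
      derivWithin (fun s => P ξ s) (Ici 0) t + v t * deriv (fun ζ => P ζ t) ξ
        = -a₀ * P ξ t + ωB ξ / ℓ)
    (hQpde : ∀ ξ, ∀ t ∈ Ici (0 : ℝ),
      derivWithin (fun s => Q ξ s) (Ici 0) t - v t * deriv (fun ζ => Q ζ t) ξ
        = -a₀ * Q ξ t + ωB ξ / ℓ)
    (hforce : ∀ t ∈ Ici (0 : ℝ),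
      2 * η * v t
        = (∫ ξ in (0 : ℝ)..ℓ,
            (P ξ t - Q ξ t) * deriv (fun ζ => U * Real.cos (2 * π * ζ / ℓ)) ξ)
          - 2 * k * x t) :
    (∀ n : ℕ, 1 ≤ n → ∀ t ∈ Ici (0 : ℝ),
      HasDerivWithinAt (fun s => fourCos ℓ (fun ξ => P ξ s) n)
        (-a₀ * fourCos ℓ (fun ξ => P ξ t) n + fourCos ℓ ωB n / ℓ
          - (2 * π * n / ℓ) * v t * fourSin ℓ (fun ξ => P ξ t) n) (Ici 0) t ∧
      HasDerivWithinAt (fun s => fourSin ℓ (fun ξ => P ξ s) n)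
        (-a₀ * fourSin ℓ (fun ξ => P ξ t) n + fourSin ℓ ωB n / ℓ
          + (2 * π * n / ℓ) * v t * fourCos ℓ (fun ξ => P ξ t) n) (Ici 0) t ∧
      HasDerivWithinAt (fun s => fourCos ℓ (fun ξ => Q ξ s) n)
        (-a₀ * fourCos ℓ (fun ξ => Q ξ t) n + fourCos ℓ ωB n / ℓ
          + (2 * π * n / ℓ) * v t * fourSin ℓ (fun ξ => Q ξ t) n) (Ici 0) t ∧
      HasDerivWithinAt (fun s => fourSin ℓ (fun ξ => Q ξ s) n)
        (-a₀ * fourSin ℓ (fun ξ => Q ξ t) n + fourSin ℓ ωB n / ℓ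
          - (2 * π * n / ℓ) * v t * fourCos ℓ (fun ξ => Q ξ t) n) (Ici 0) t) ∧
    (∀ t ∈ Ici (0 : ℝ),
      2 * η * v t + 2 * k * x t
        + π * U * (fourSin ℓ (fun ξ => P ξ t) 1 - fourSin ℓ (fun ξ => Q ξ t) 1) = 0) := by
  refine ⟨fun n _ t ht => ?_, fun t ht => ?_⟩
  · obtain ⟨hPc, hPs⟩ := hasDerivWithinAt_fourCos_fourSin_of_transport (ε := 1) (v := v) hℓ.ne'
      hωB.continuous hPreg hPper (fun ξ s hs => by linear_combination hPpde ξ s hs) n ht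
    obtain ⟨hQc, hQs⟩ := hasDerivWithinAt_fourCos_fourSin_of_transport (ε := -1) (v := v) hℓ.ne'
      hωB.continuous hQreg hQper (fun ξ s hs => by linear_combination hQpde ξ s hs) n ht
    exact ⟨hPc.congr_deriv (by ring), hPs.congr_deriv (by ring),
      hQc.congr_deriv (by ring), hQs.congr_deriv (by ring)⟩
  · have h := hforce t ht
    rw [integral_mul_deriv_cos_eq_fourSin,
      fourSin_sub (hPreg.continuous_fst ht) (hQreg.continuous_fst ht)] at h
    linear_combination h

/-- **Fourier reduction of the two-row model** with `ΔW(ξ) = U cos(2πξ/ℓ)`: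
the Fourier coefficients of a `C¹` solution `(P, Q, x)` satisfy, for each `n ≥ 1`,
the coupled ODE system, and the force balance becomes
`2ηx' + 2kx + πU(p₁ˢ − q₁ˢ) = 0`. -/
theorem two_row_fourier_reduction
    (ℓ k η U a₀ : ℝ) (hℓ : 0 < ℓ) (hk : 0 < k) (hη : 0 < η) (hU : 0 < U) (ha₀ : 0 < a₀)
    (ωA ωB : ℝ → ℝ)
    (hωA : ContDiff ℝ 1 ωA) (hωAper : Function.Periodic ωA ℓ)
    (hωB : ContDiff ℝ 1 ωB) (hωBper : Function.Periodic ωB ℓ)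
    (hsum : ∀ ξ, ωA ξ + ωB ξ = a₀)
    (P Q : ℝ → ℝ → ℝ) (x v : ℝ → ℝ)
    (hPreg : ContDiffOn ℝ 1 (fun p : ℝ × ℝ => P p.1 p.2) (univ ×ˢ Ici 0))
    (hQreg : ContDiffOn ℝ 1 (fun p : ℝ × ℝ => Q p.1 p.2) (univ ×ˢ Ici 0))
    (hPper : ∀ t ∈ Ici (0 : ℝ), Function.Periodic (fun ξ => P ξ t) ℓ)
    (hQper : ∀ t ∈ Ici (0 : ℝ), Function.Periodic (fun ξ => Q ξ t) ℓ)
    (hv : ∀ t ∈ Ici (0 : ℝ), HasDerivWithinAt x (v t) (Ici 0) t)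
    (hvcont : ContinuousOn v (Ici 0))
    (hPpde : ∀ ξ, ∀ t ∈ Ici (0 : ℝ),
      derivWithin (fun s => P ξ s) (Ici 0) t + v t * deriv (fun ζ => P ζ t) ξ
        = -a₀ * P ξ t + ωB ξ / ℓ)
    (hQpde : ∀ ξ, ∀ t ∈ Ici (0 : ℝ),
      derivWithin (fun s => Q ξ s) (Ici 0) t - v t * deriv (fun ζ => Q ζ t) ξ
        = -a₀ * Q ξ t + ωB ξ / ℓ)
    (hforce : ∀ t ∈ Ici (0 : ℝ),
      2 * η * v t
        = (∫ ξ in (0 : ℝ)..ℓ,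
            (P ξ t - Q ξ t) * deriv (fun ζ => U * Real.cos (2 * π * ζ / ℓ)) ξ)
          - 2 * k * x t) :
    (∀ n : ℕ, 1 ≤ n → ∀ t ∈ Ici (0 : ℝ),
      HasDerivWithinAt (fun s => fourCos ℓ (fun ξ => P ξ s) n)
        (-a₀ * fourCos ℓ (fun ξ => P ξ t) n + fourCos ℓ ωB n / ℓ
          - (2 * π * n / ℓ) * v t * fourSin ℓ (fun ξ => P ξ t) n) (Ici 0) t ∧
      HasDerivWithinAt (fun s => fourSin ℓ (fun ξ => P ξ s) n)
        (-a₀ * fourSin ℓ (fun ξ => P ξ t) n + fourSin ℓ ωB n / ℓ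
          + (2 * π * n / ℓ) * v t * fourCos ℓ (fun ξ => P ξ t) n) (Ici 0) t ∧
      HasDerivWithinAt (fun s => fourCos ℓ (fun ξ => Q ξ s) n)
        (-a₀ * fourCos ℓ (fun ξ => Q ξ t) n + fourCos ℓ ωB n / ℓ
          + (2 * π * n / ℓ) * v t * fourSin ℓ (fun ξ => Q ξ t) n) (Ici 0) t ∧
      HasDerivWithinAt (fun s => fourSin ℓ (fun ξ => Q ξ s) n)
        (-a₀ * fourSin ℓ (fun ξ => Q ξ t) n + fourSin ℓ ωB n / ℓ
          - (2 * π * n / ℓ) * v t * fourCos ℓ (fun ξ => Q ξ t) n) (Ici 0) t) ∧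
    (∀ t ∈ Ici (0 : ℝ),
      2 * η * v t + 2 * k * x t
        + π * U * (fourSin ℓ (fun ξ => P ξ t) 1 - fourSin ℓ (fun ξ => Q ξ t) 1) = 0) :=
  two_row_fourier_reduction_general ℓ k η U a₀ hℓ ωB hωB P Q x v hPreg hQreg hPper hQper hPpde hQpde
    hforce
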